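/- arXiv:1706.05918 — 4 statements merged into one kernel-verified Lean document; each statement's English description precedes it below -/
import Mathlib

section
/- Let {T_n} be a sequence of reals with T_0 = 1, and define {β_n} by β_0 = 1 and β_n = -∑_{s=0}^{n-1} β_s·T_{n-s}. Let {v_n} satisfy v_n = T_n - (1/n)∑_{s=1}^{n-1} s·v_s·T_{n-s}. Then for all n ≥ 1, β_n = -(1/n)·∑_{s=1}^{n} s·v_s·β_{n-s}. -/
open Finset

theorem beta_recursion_via_v (T β v : ℕ → ℝ)
    (hT0 : T 0 = 1)
    (hβ0 : β 0 = 1)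
    (hβ : ∀ n : ℕ, 1 ≤ n → β n = -∑ s ∈ Finset.range n, β s * T (n - s))
    (hv : ∀ n : ℕ, 1 ≤ n →
      v n = T n - (1 / (n : ℝ)) * ∑ s ∈ Finset.Icc 1 (n - 1), (s : ℝ) * v s * T (n - s)) :
    ∀ n : ℕ, 1 ≤ n →
      β n = -(1 / (n : ℝ)) * ∑ s ∈ Finset.Icc 1 n, (s : ℝ) * v s * β (n - s) := by
  -- convolution of β and T vanishes in positive degree
  have hD : ∀ m : ℕ, 1 ≤ m → ∑ s ∈ Finset.range m, β s * T (m - s) = -β m := by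
    intro m hm
    have := hβ m hm
    linarith
  -- n * T n = ∑_{t=1}^n t v_t T_{n-t}
  have hE : ∀ m : ℕ, 1 ≤ m →
      ((m : ℝ)) * T m = ∑ t ∈ Finset.Icc 1 m, (t : ℝ) * v t * T (m - t) := by
    intro m hm
    have hm0 : (m : ℝ) ≠ 0 := Nat.cast_ne_zero.mpr (by omega)
    have h1 := hv m hm
    have hsplit : ∑ t ∈ Finset.Icc 1 m, (t : ℝ) * v t * T (m - t)
        = (∑ t ∈ Finset.Icc 1 (m - 1), (t : ℝ) * v t * T (m - t)) + (m : ℝ) * v m * T 0 := by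
      have : Finset.Icc 1 m = insert m (Finset.Icc 1 (m - 1)) := by
        ext x
        simp only [Finset.mem_insert, Finset.mem_Icc]
        omega
      rw [this, Finset.sum_insert (by simp; omega), Nat.sub_self]
      ring
    rw [hsplit, hT0, mul_one]
    have h2 : (m : ℝ) * v m = (m : ℝ) * T m - ∑ t ∈ Finset.Icc 1 (m - 1), (t : ℝ) * v t * T (m - t) := by
      rw [h1]
      field_simp
    linarith [h2]
  have key : ∀ n : ℕ, 1 ≤ n →
      (n : ℝ) * β n = -∑ s ∈ Finset.Icc 1 n, (s : ℝ) * v s * β (n - s) := by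
    intro n
    induction n using Nat.strong_induction_on with
    | _ n IH =>
      intro hn
      -- Term A : ∑ s ∈ range n, β s * ((n-s) * T (n-s)) = n * v n
      have hA : ∑ s ∈ Finset.range n, β s * (((n - s : ℕ) : ℝ) * T (n - s))
          = (n : ℝ) * v n := by
        have step1 : ∀ s ∈ Finset.range n,
            β s * (((n - s : ℕ) : ℝ) * T (n - s))
            = ∑ t ∈ Finset.Icc 1 (n - s), (t : ℝ) * v t * (β s * T (n - s - t)) := by
          intro s hs
          rw [Finset.mem_range] at hs
          rw [hE (n - s) (by omega), Finset.mul_sum]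
          apply Finset.sum_congr rfl
          intro t ht
          ring
        rw [Finset.sum_congr rfl step1]
        rw [Finset.sum_comm' (t' := Finset.Icc 1 n) (s' := fun t => Finset.range (n + 1 - t))
          (by intro s t; simp only [Finset.mem_range, Finset.mem_Icc]; omega)]
        have step2 : ∀ t ∈ Finset.Icc 1 n,
            ∑ s ∈ Finset.range (n + 1 - t), (t : ℝ) * v t * (β s * T (n - s - t))
            = if t = n then (n : ℝ) * v n else 0 := by
          intro t ht
          rw [Finset.mem_Icc] at ht
          by_cases htn : t = n
          · subst htn
            simp [hβ0, hT0]
          · have h1t : 1 ≤ n - t := by omega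
            have : ∑ s ∈ Finset.range (n + 1 - t), (t : ℝ) * v t * (β s * T (n - s - t))
                = (t : ℝ) * v t * ∑ s ∈ Finset.range (n - t + 1), β s * T ((n - t) - s) := by
              rw [Finset.mul_sum]
              apply Finset.sum_congr (by congr 1; omega)
              intro s hs
              rw [Finset.mem_range] at hs
              congr 3
              omega
            rw [this, Finset.sum_range_succ, hD (n - t) h1t, Nat.sub_self, hT0]
            simp [htn]
        rw [Finset.sum_congr rfl step2, Finset.sum_ite_eq' (Finset.Icc 1 n) n (fun _ => (n : ℝ) * v n)]
        simp [hn]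
      have hB : ∑ s ∈ Finset.range n, ((s : ℝ) * β s) * T (n - s)
          = ∑ t ∈ Finset.Icc 1 (n - 1), (t : ℝ) * v t * β (n - t) := by
        have hr : Finset.range n = insert 0 (Finset.Icc 1 (n - 1)) := by
          ext x
          simp only [Finset.mem_range, Finset.mem_insert, Finset.mem_Icc]
          omega
        rw [hr, Finset.sum_insert (by simp)]
        simp only [Nat.cast_zero, zero_mul]
        rw [zero_add]
        have step1 : ∀ s ∈ Finset.Icc 1 (n - 1),
            ((s : ℝ) * β s) * T (n - s)
            = ∑ t ∈ Finset.Icc 1 s, (t : ℝ) * v t * (-(β (s - t) * T (n - s))) := by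
          intro s hs
          rw [Finset.mem_Icc] at hs
          have := IH s (by omega) (by omega)
          rw [show (s : ℝ) * β s = -∑ u ∈ Finset.Icc 1 s, (u : ℝ) * v u * β (s - u) by linarith]
          rw [neg_mul, Finset.sum_mul, ← Finset.sum_neg_distrib]
          apply Finset.sum_congr rfl
          intro t ht
          ring
        rw [Finset.sum_congr rfl step1]
        rw [Finset.sum_comm' (t' := Finset.Icc 1 (n - 1)) (s' := fun t => Finset.Icc t (n - 1))
          (by intro s t; simp only [Finset.mem_Icc]; omega)]
        apply Finset.sum_congr rfl
        intro t ht
        rw [Finset.mem_Icc] at ht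
        have hIco : Finset.Icc t (n - 1) = Finset.Ico t n := by
          ext x
          simp only [Finset.mem_Icc, Finset.mem_Ico]
          omega
        have : ∑ s ∈ Finset.Icc t (n - 1), (t : ℝ) * v t * (-(β (s - t) * T (n - s)))
            = (t : ℝ) * v t * (-∑ u ∈ Finset.range (n - t), β u * T ((n - t) - u)) := by
          rw [hIco, Finset.sum_Ico_eq_sum_range, mul_neg, Finset.mul_sum, ← Finset.sum_neg_distrib]
          apply Finset.sum_congr rfl
          intro u hu
          rw [Finset.mem_range] at hu
          rw [show t + u - t = u by omega, show n - (t + u) = n - t - u by omega]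
          ring
        rw [this, hD (n - t) (by omega)]
        ring
      -- combine
      have hsplitn : ∑ s ∈ Finset.Icc 1 n, (s : ℝ) * v s * β (n - s)
          = (∑ s ∈ Finset.Icc 1 (n - 1), (s : ℝ) * v s * β (n - s)) + (n : ℝ) * v n := by
        have : Finset.Icc 1 n = insert n (Finset.Icc 1 (n - 1)) := by
          ext x
          simp only [Finset.mem_insert, Finset.mem_Icc]
          omega
        rw [this, Finset.sum_insert (by simp; omega), Nat.sub_self, hβ0]
        ring
      have hmain : (n : ℝ) * β n
          = -(∑ s ∈ Finset.range n, β s * (((n - s : ℕ) : ℝ) * T (n - s)))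
            - ∑ s ∈ Finset.range n, ((s : ℝ) * β s) * T (n - s) := by
        have step : ∀ s ∈ Finset.range n,
            (n : ℝ) * (β s * T (n - s))
            = β s * (((n - s : ℕ) : ℝ) * T (n - s)) + ((s : ℝ) * β s) * T (n - s) := by
          intro s hs
          rw [Finset.mem_range] at hs
          rw [Nat.cast_sub (by omega)]
          ring
        rw [hβ n hn, mul_neg, Finset.mul_sum, Finset.sum_congr rfl step,
          Finset.sum_add_distrib]
        ring
      rw [hmain, hA, hB, hsplitn]
      ring
  intro n hn
  have h := key n hn
  have hn0 : (n : ℝ) ≠ 0 := Nat.cast_ne_zero.mpr (by omega)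
  field_simp
  linarith
end

section
/- Let (T_n, t_n, a_n) be a Warlimont triple and define v_n by v_n = T_n - (1/n)∑_{s=1}^{n-1} s·v_s·T_{n-s} and b_n by b_n = n·a_n - ∑_{s=1}^{n-1} b_s·a_{n-s}. Then for all n ≥ 1, v_n = ∑_{d | n} (d/n)·t_d·b_{n/d}, where the sum ranges over all positive divisors d of n. -/
open PowerSeries Finset

/-- The power series `∑_{k≥0} a_k x^{km}`. -/
noncomputable def innerSeries (a : ℕ → ℝ) (m : ℕ) : PowerSeries ℝ :=
  PowerSeries.mk fun j => if m ∣ j then a (j / m) else 0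

/-- The Euler-product identity `∑_{n≥0} T_n x^n = ∏_{m≥1} (∑_{k≥0} a_k x^{km})^{t_m}`,
expressed coefficientwise: the factors with `m > n` do not affect the `n`-th
coefficient, so the infinite product may be truncated at `m = n`. -/
def WarlimontEq (T : ℕ → ℝ) (t : ℕ → ℕ) (a : ℕ → ℝ) : Prop :=
  ∀ n : ℕ, PowerSeries.coeff (R := ℝ) n (PowerSeries.mk T) =
    PowerSeries.coeff (R := ℝ) n (∏ m ∈ Finset.Icc 1 n, (innerSeries a m) ^ (t m))

/-- A Warlimont triple: nonnegative sequences satisfying the Euler-product identity,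
with `T_0 = a_0 = 1`, `a_1 > 0` and the `t_m` nonnegative integers. -/
structure IsWarlimontTriple (T : ℕ → ℝ) (t : ℕ → ℕ) (a : ℕ → ℝ) : Prop where
  hT_nonneg : ∀ n, 0 ≤ T n
  ha_nonneg : ∀ n, 0 ≤ a n
  hT0 : T 0 = 1
  ha0 : a 0 = 1
  ha1 : 0 < a 1
  heq : WarlimontEq T t a


/-!
Apply the Euler operator `x d/dx`, a derivation, to the truncated product
`F = ∏_{m ≤ N} A(x^m)^{t_m}` with `A = ∑ a_k x^k`. The recursion for `b` says `x A' = B A` with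
`B = ∑_{k ≥ 1} b_k x^k`, so `x d/dx A(x^m) = m B(x^m) A(x^m)` and `x F' = G F` with
`G = ∑_m m t_m B(x^m)`, whose `s`-th coefficient is `∑_{d ∣ s} d t_d b_{s/d}`. Reading off the
`N`-th coefficient gives `N T_N = ∑_{s=1}^N G_s T_{N-s}`; the recursion for `v` is the same
identity with `s v_s` in place of `G_s`, and since `T_0 = 1` such a convolution identity
determines the coefficients, so `s v_s = G_s`.
-/

namespace Derivation

variable {R A : Type*} [CommSemiring R] [CommSemiring A] [Algebra R A] (D : Derivation R A A)

theorem map_pow_of_eq_mul {f g : A} (h : D f = g * f) (k : ℕ) :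
    D (f ^ k) = k • g * f ^ k := by
  induction k with
  | zero => simp
  | succ k ih =>
    rw [pow_succ, leibniz, ih, h, smul_eq_mul, smul_eq_mul, succ_nsmul]
    ring

theorem map_prod_of_eq_mul {ι : Type*} (s : Finset ι) {f g : ι → A}
    (h : ∀ i ∈ s, D (f i) = g i * f i) :
    D (∏ i ∈ s, f i) = (∑ i ∈ s, g i) * ∏ i ∈ s, f i := by
  classical
  induction s using Finset.induction_on with
  | empty => simp
  | insert i s hi ih =>
    rw [prod_insert hi, sum_insert hi, leibniz, smul_eq_mul, smul_eq_mul,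
      ih fun j hj => h j (mem_insert_of_mem hj), h i (mem_insert_self i s)]
    ring

end Derivation

theorem Nat.filter_dvd_Icc_eq_divisors {n N : ℕ} (hn : n ≠ 0) (hnN : n ≤ N) :
    {d ∈ Icc 1 N | d ∣ n} = n.divisors := by
  ext d
  simp only [mem_filter, mem_Icc, Nat.mem_divisors]
  constructor
  · exact fun ⟨_, hd⟩ => ⟨hd, hn⟩
  · exact fun ⟨hd, _⟩ => ⟨⟨Nat.pos_of_dvd_of_pos hd (Nat.pos_of_ne_zero hn),
      (Nat.le_of_dvd (Nat.pos_of_ne_zero hn) hd).trans hnN⟩, hd⟩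

section Convolution

variable {R : Type*} [Ring R] {x y : ℕ → R}

theorem sum_Icc_mul_eq_of_eq_sub (hy : y 0 = 1) {n : ℕ} (hn : 1 ≤ n) {c : R}
    (h : x n = c - ∑ s ∈ Icc 1 (n - 1), x s * y (n - s)) :
    ∑ s ∈ Icc 1 n, x s * y (n - s) = c := by
  obtain ⟨k, rfl⟩ := Nat.exists_eq_add_of_le' hn
  rw [sum_Icc_succ_top (by omega), Nat.sub_self, hy, mul_one, h, Nat.add_sub_cancel]
  abel

theorem eq_of_sum_Icc_mul_eq {T : ℕ → R} (hT : T 0 = 1)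
    (h : ∀ n, ∑ s ∈ Icc 1 n, x s * T (n - s) = ∑ s ∈ Icc 1 n, y s * T (n - s))
    {n : ℕ} (hn : 1 ≤ n) : x n = y n := by
  induction n using Nat.strong_induction_on with
  | _ n ih =>
    obtain ⟨k, rfl⟩ := Nat.exists_eq_add_of_le' hn
    have hlower : ∑ s ∈ Icc 1 k, x s * T (k + 1 - s) = ∑ s ∈ Icc 1 k, y s * T (k + 1 - s) :=
      sum_congr rfl fun s hs => by rw [ih s (by grind) (mem_Icc.mp hs).1]
    have htop := h (k + 1)
    rwa [sum_Icc_succ_top (by omega), sum_Icc_succ_top (by omega), Nat.sub_self, hT, mul_one,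
      mul_one, hlower, add_right_inj] at htop

end Convolution

namespace PowerSeries

variable {R : Type*} [CommRing R]

noncomputable def eulerDerivation : Derivation R R⟦X⟧ R⟦X⟧ := (X : R⟦X⟧) • derivative R

theorem eulerDerivation_apply (f : R⟦X⟧) : eulerDerivation f = X * d⁄dX R f := rfl

theorem coeff_eulerDerivation (f : R⟦X⟧) (n : ℕ) :
    coeff n (eulerDerivation f) = n * coeff n f := by
  rcases n with _ | n
  · simp [eulerDerivation_apply]
  · rw [eulerDerivation_apply, coeff_succ_X_mul, coeff_derivative]
    push_cast
    ring

theorem eulerDerivation_expand (m : ℕ) (hm : m ≠ 0) (f : R⟦X⟧) :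
    eulerDerivation (expand m hm f) = m • expand m hm (eulerDerivation f) := by
  ext n
  rw [coeff_eulerDerivation, map_nsmul, coeff_expand, coeff_expand]
  split_ifs with hmn
  · obtain ⟨k, rfl⟩ := hmn
    rw [Nat.mul_div_cancel_left _ (Nat.pos_of_ne_zero hm), coeff_eulerDerivation, nsmul_eq_mul]
    push_cast
    ring
  · simp

theorem coeff_mul_eq_sum_Icc {f : R⟦X⟧} (hf : coeff 0 f = 0) (g : R⟦X⟧) (n : ℕ) :
    coeff n (f * g) = ∑ s ∈ Icc 1 n, coeff s f * coeff (n - s) g := by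
  rw [coeff_mul, Nat.sum_antidiagonal_eq_sum_range_succ (fun i j => coeff i f * coeff j g),
    Nat.range_succ_eq_Icc_zero, ← insert_Icc_add_one_left_eq_Icc (Nat.zero_le n),
    sum_insert (by simp), hf, zero_mul, zero_add, zero_add]

theorem coeff_mul_eq_of_X_pow_dvd_sub_one {f : R⟦X⟧} {m n : ℕ} (hf : X ^ m ∣ f - 1)
    (hn : n < m) (g : R⟦X⟧) : coeff n (g * f) = coeff n g := by
  have hdvd : X ^ m ∣ g * f - g := by
    simpa [mul_sub] using dvd_mul_of_dvd_right hf g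
  simpa [sub_eq_zero] using X_pow_dvd_iff.mp hdvd n hn

theorem eulerDerivation_mk_eq_mul {a b : ℕ → R}
    (h : ∀ n, ∑ s ∈ Icc 1 n, b s * a (n - s) = n * a n) :
    eulerDerivation (mk a) = mk (Function.update b 0 0) * mk a := by
  ext n
  rw [coeff_eulerDerivation, coeff_mul_eq_sum_Icc (by simp), coeff_mk, ← h n]
  refine sum_congr rfl fun s hs => ?_
  rw [coeff_mk, coeff_mk, Function.update_of_ne (by grind)]

end PowerSeries

theorem innerSeries_eq_expand (a : ℕ → ℝ) {m : ℕ} (hm : m ≠ 0) :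
    innerSeries a m = expand m hm (mk a) := by
  ext n
  rw [innerSeries, coeff_mk, coeff_expand, coeff_mk]

theorem X_pow_dvd_innerSeries_sub_one {a : ℕ → ℝ} (ha0 : a 0 = 1) (m : ℕ) :
    X ^ m ∣ innerSeries a m - 1 := by
  refine X_pow_dvd_iff.mpr fun j hj => ?_
  rw [map_sub, innerSeries, coeff_mk, coeff_one]
  rcases j with _ | j
  · simp [ha0]
  · simp [Nat.not_dvd_of_pos_of_lt (Nat.succ_pos j) hj]

theorem eulerDerivation_innerSeries {a b : ℕ → ℝ}
    (h : ∀ n, ∑ s ∈ Icc 1 n, b s * a (n - s) = n * a n) {m : ℕ} (hm : m ≠ 0) :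
    eulerDerivation (innerSeries a m) =
      m • innerSeries (Function.update b 0 0) m * innerSeries a m := by
  rw [innerSeries_eq_expand a hm, innerSeries_eq_expand _ hm, eulerDerivation_expand,
    eulerDerivation_mk_eq_mul h, map_mul, smul_mul_assoc]

namespace WarlimontEq

variable {T : ℕ → ℝ} {t : ℕ → ℕ} {a : ℕ → ℝ}

theorem coeff_prod (h : WarlimontEq T t a) (ha0 : a 0 = 1) {n N : ℕ} (hn : n ≤ N) :
    coeff n (∏ m ∈ Icc 1 N, innerSeries a m ^ t m) = T n := by
  have hIcc (k : ℕ) : Icc 1 k = Ioc 0 k := by simpa using Icc_add_one_left_eq_Ioc 0 k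
  have htail : X ^ (n + 1) ∣ (∏ m ∈ Ioc n N, innerSeries a m ^ t m) - 1 := by
    refine prod_induction _ (fun f => X ^ (n + 1) ∣ f - 1) (fun f g hf hg => ?_) (by simp)
      fun m hm => ?_
    · rw [show f * g - 1 = (f - 1) * g + (g - 1) by ring]
      exact dvd_add (dvd_mul_of_dvd_left hf g) hg
    · simpa using (pow_dvd_pow X (mem_Ioc.mp hm).1).trans
        ((X_pow_dvd_innerSeries_sub_one ha0 m).trans (sub_dvd_pow_sub_pow _ 1 (t m)))
  rw [hIcc, ← prod_Ioc_consecutive _ (Nat.zero_le n) hn,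
    coeff_mul_eq_of_X_pow_dvd_sub_one htail (Nat.lt_succ_self n), ← hIcc, ← h n, coeff_mk]

theorem sum_Icc_divisors_mul {b : ℕ → ℝ} (h : WarlimontEq T t a) (ha0 : a 0 = 1)
    (hb : ∀ n, ∑ s ∈ Icc 1 n, b s * a (n - s) = n * a n) (N : ℕ) :
    ∑ s ∈ Icc 1 N, (∑ d ∈ s.divisors, (d : ℝ) * t d * b (s / d)) * T (N - s) = N * T N := by
  set b₀ := Function.update b 0 0
  set F := ∏ m ∈ Icc 1 N, innerSeries a m ^ t m
  set G := ∑ m ∈ Icc 1 N, (t m * m) • innerSeries b₀ m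
  have hF : eulerDerivation F = G * F := by
    refine Derivation.map_prod_of_eq_mul _ _ fun m hm => ?_
    rw [Derivation.map_pow_of_eq_mul _ (eulerDerivation_innerSeries hb (by grind)), smul_smul]
  have hG0 : coeff 0 G = 0 := by
    simp [G, b₀, innerSeries]
  have hG (s : ℕ) (hs : s ∈ Icc 1 N) :
      coeff s G = ∑ d ∈ s.divisors, (d : ℝ) * t d * b (s / d) := by
    obtain ⟨hs1, hsN⟩ := mem_Icc.mp hs
    simp only [G, map_sum, map_nsmul, innerSeries, coeff_mk, smul_ite, smul_zero]
    rw [← sum_filter, Nat.filter_dvd_Icc_eq_divisors (by omega) hsN]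
    refine sum_congr rfl fun d hd => ?_
    have hquot : s / d ≠ 0 :=
      (Nat.div_pos (Nat.divisor_le hd) (Nat.pos_of_mem_divisors hd)).ne'
    rw [show b₀ (s / d) = b (s / d) from Function.update_of_ne hquot _ _, nsmul_eq_mul]
    push_cast
    ring
  calc ∑ s ∈ Icc 1 N, (∑ d ∈ s.divisors, (d : ℝ) * t d * b (s / d)) * T (N - s)
      = ∑ s ∈ Icc 1 N, coeff s G * coeff (N - s) F :=
        sum_congr rfl fun s hs => by rw [hG s hs, h.coeff_prod ha0 (Nat.sub_le N s)]
    _ = N * T N := by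
        rw [← coeff_mul_eq_sum_Icc hG0, ← hF, coeff_eulerDerivation, h.coeff_prod ha0 le_rfl]

end WarlimontEq

theorem warlimont_v_divisor_sum (T : ℕ → ℝ) (t : ℕ → ℕ) (a : ℕ → ℝ) (v b : ℕ → ℝ)
    (h : IsWarlimontTriple T t a)
    (hv : ∀ n : ℕ, 1 ≤ n →
      v n = T n - (1 / (n : ℝ)) * ∑ s ∈ Finset.Icc 1 (n - 1), (s : ℝ) * v s * T (n - s))
    (hb : ∀ n : ℕ, 1 ≤ n →
      b n = (n : ℝ) * a n - ∑ s ∈ Finset.Icc 1 (n - 1), b s * a (n - s)) :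
    ∀ n : ℕ, 1 ≤ n →
      v n = ∑ d ∈ n.divisors, ((d : ℝ) / n) * (t d : ℝ) * b (n / d) := by
  have hba (n : ℕ) : ∑ s ∈ Icc 1 n, b s * a (n - s) = n * a n := by
    rcases n with _ | n
    · simp
    · exact sum_Icc_mul_eq_of_eq_sub h.ha0 (by omega) (hb _ (by omega))
  have hvT (n : ℕ) : ∑ s ∈ Icc 1 n, (s * v s) * T (n - s) = n * T n := by
    rcases n with _ | n
    · simp
    · refine sum_Icc_mul_eq_of_eq_sub h.hT0 (by omega) ?_
      rw [hv (n + 1) (by omega)]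
      field_simp
  intro n hn
  have hnv := eq_of_sum_Icc_mul_eq h.hT0
    (fun N => (hvT N).trans (h.heq.sum_Icc_divisors_mul h.ha0 hba N).symm) hn
  have hn0 : (n : ℝ) ≠ 0 := by positivity
  rw [← mul_div_cancel_left₀ (v n) hn0, hnv, sum_div]
  exact sum_congr rfl fun d _ => by ring
end

section
/- Let {a_n} be reals with a_0 = 1, |a_n| ≤ r^n for all n and some r > 1, and define b_n = n·a_n - ∑_{s=1}^{n-1} b_s·a_{n-s} with b_1 = a_1. Then |b_n| ≤ (3r)^n for all n ≥ 1. -/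
open Finset

theorem b_growth_bound (a b : ℕ → ℝ) (r : ℝ)
    (ha0 : a 0 = 1) (hr : 1 < r)
    (ha : ∀ n : ℕ, |a n| ≤ r ^ n)
    (hb : ∀ n : ℕ, 1 ≤ n →
      b n = (n : ℝ) * a n - ∑ s ∈ Finset.Icc 1 (n - 1), b s * a (n - s)) :
    ∀ n : ℕ, 1 ≤ n → |b n| ≤ (3 * r) ^ n := by
  have hr0 : (0:ℝ) < r := lt_trans one_pos hr
  have key : ∀ n : ℕ, (n:ℝ) + ∑ s ∈ Finset.Icc 1 (n-1), (3:ℝ)^s ≤ 3^n := by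
    intro n
    induction n with
    | zero => simp
    | succ n ih =>
      rcases Nat.eq_zero_or_pos n with h | h
      · subst h; norm_num
      · have h3 : (1:ℝ) ≤ 3^n := one_le_pow₀ (by norm_num : (1:ℝ) ≤ 3)
        have hrw : Finset.Icc 1 (n+1-1) = Finset.Icc 1 ((n-1)+1) := by
          congr 1; omega
        rw [hrw, Finset.sum_Icc_succ_top (by omega : 1 ≤ (n-1)+1)]
        have hrw2 : (n-1)+1 = n := by omega
        rw [hrw2]
        rw [pow_succ]
        push_cast
        nlinarith [ih]
  intro n
  induction n using Nat.strong_induction_on with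
  | _ n ih =>
    intro hn
    rw [hb n hn]
    have hsum : |∑ s ∈ Finset.Icc 1 (n-1), b s * a (n-s)| ≤
        (∑ s ∈ Finset.Icc 1 (n-1), (3:ℝ)^s) * r^n := by
      calc |∑ s ∈ Finset.Icc 1 (n-1), b s * a (n-s)|
          ≤ ∑ s ∈ Finset.Icc 1 (n-1), |b s * a (n-s)| :=
            Finset.abs_sum_le_sum_abs _ _
        _ ≤ ∑ s ∈ Finset.Icc 1 (n-1), (3:ℝ)^s * r^n := by
            apply Finset.sum_le_sum
            intro s hs
            obtain ⟨hs1, hs2⟩ := Finset.mem_Icc.mp hs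
            have hsn : s < n := by omega
            rw [abs_mul]
            have h1 : |b s| ≤ (3*r)^s := ih s hsn hs1
            have h2 : |a (n-s)| ≤ r^(n-s) := ha _
            have heq : (3*r)^s * r^(n-s) = 3^s * r^n := by
              rw [mul_pow, mul_assoc, ← pow_add]
              congr 2
              omega
            rw [← heq]
            exact mul_le_mul h1 h2 (abs_nonneg _) (by positivity)
        _ = _ := by rw [← Finset.sum_mul]
    have han : |(n:ℝ) * a n| ≤ (n:ℝ) * r^n := by
      rw [abs_mul, abs_of_nonneg (Nat.cast_nonneg n)]
      exact mul_le_mul_of_nonneg_left (ha n) (Nat.cast_nonneg n)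
    calc |(n:ℝ) * a n - ∑ s ∈ Finset.Icc 1 (n-1), b s * a (n-s)|
        ≤ |(n:ℝ) * a n| + |∑ s ∈ Finset.Icc 1 (n-1), b s * a (n-s)| := abs_sub _ _
      _ ≤ (n:ℝ)*r^n + (∑ s ∈ Finset.Icc 1 (n-1), (3:ℝ)^s)*r^n := add_le_add han hsum
      _ = ((n:ℝ) + ∑ s ∈ Finset.Icc 1 (n-1), (3:ℝ)^s) * r^n := by ring
      _ ≤ 3^n * r^n := mul_le_mul_of_nonneg_right (key n) (by positivity)
      _ = (3*r)^n := (mul_pow 3 r n).symm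
end

section
/- Let {T_n}, {β_n}, {v_n} be as follows: T_0 = 1; β_0 = 1, β_n = -∑_{s=0}^{n-1} β_s·T_{n-s}; v_n = T_n - (1/n)∑_{s=1}^{n-1} s·v_s·T_{n-s}. Then for every positive integer R and all n ≥ 2R, ∑_{s=0}^{R-1} β_s·T_{n-s} = v_n + (1/n)·∑_{r=0}^{R-1} β_r·∑_{s=R-r}^{n-R} s·v_s·T_{n-r-s}. -/
open Finset

lemma sw_lemma (g : ℕ → ℕ → ℝ) (N : ℕ) :
    ∑ r ∈ Finset.range N, ∑ t ∈ Finset.range (N - r), g r t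
      = ∑ m ∈ Finset.range N, ∑ t ∈ Finset.range (m + 1), g (m - t) t := by
  induction N with
  | zero => simp
  | succ N ih =>
    rw [Finset.sum_range_succ (f := fun m => ∑ t ∈ Finset.range (m + 1), g (m - t) t), ← ih,
      Finset.sum_range_succ]
    have h1 : ∀ r ∈ Finset.range N,
        ∑ t ∈ Finset.range (N + 1 - r), g r t
          = ∑ t ∈ Finset.range (N - r), g r t + g r (N - r) := by
      intro r hr
      rw [show N + 1 - r = (N - r) + 1 by simp at hr; omega, Finset.sum_range_succ]
    rw [Finset.sum_congr rfl h1, Finset.sum_add_distrib]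
    have h2 : ∑ t ∈ Finset.range (N + 1), g (N - t) t
        = ∑ r ∈ Finset.range (N + 1), g r (N - r) := by
      rw [← Finset.sum_range_reflect]
      apply Finset.sum_congr rfl
      intro j hj
      simp only [Finset.mem_range] at hj
      congr 1 <;> omega
    rw [h2, Finset.sum_range_succ (f := fun r => g r (N - r))]
    simp only [Nat.sub_self]
    simp [show 1 + N - N = 1 by omega, add_assoc]
open Finset

lemma conv_one (T β : ℕ → ℝ) (hT0 : T 0 = 1) (hβ0 : β 0 = 1)
    (hβ : ∀ n : ℕ, 1 ≤ n → β n = -∑ s ∈ Finset.range n, β s * T (n - s)) :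
    ∀ n : ℕ, ∑ s ∈ Finset.range (n + 1), β s * T (n - s) = if n = 0 then 1 else 0 := by
  intro n
  cases n with
  | zero => simp [hβ0, hT0]
  | succ n =>
    rw [Finset.sum_range_succ, hβ (n + 1) (by omega)]
    simp [hT0]

lemma conv_vT (T v : ℕ → ℝ) (hT0 : T 0 = 1)
    (hv : ∀ n : ℕ, 1 ≤ n →
      v n = T n - (1 / (n : ℝ)) * ∑ s ∈ Finset.Icc 1 (n - 1), (s : ℝ) * v s * T (n - s)) :
    ∀ m : ℕ, ∑ t ∈ Finset.range (m + 1), (t : ℝ) * v t * T (m - t) = (m : ℝ) * T m := by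
  intro m
  cases m with
  | zero => simp
  | succ m =>
    have h := hv (m + 1) (by omega)
    have hIcc : ∑ t ∈ Finset.range (m + 1), (t : ℝ) * v t * T (m + 1 - t)
        = ∑ s ∈ Finset.Icc 1 m, (s : ℝ) * v s * T (m + 1 - s) := by
      rw [Finset.range_eq_Ico, Finset.sum_eq_sum_Ico_succ_bot (by omega),
        Finset.Ico_add_one_right_eq_Icc]
      simp
    rw [Finset.sum_range_succ]
    simp only [Nat.add_sub_cancel, Nat.sub_self, hT0, mul_one] at h ⊢
    rw [← hIcc] at h
    push_cast at h ⊢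
    field_simp at h
    linarith [h]

lemma conv_vbeta (T β v : ℕ → ℝ) (hT0 : T 0 = 1) (hβ0 : β 0 = 1)
    (hβ : ∀ n : ℕ, 1 ≤ n → β n = -∑ s ∈ Finset.range n, β s * T (n - s))
    (hv : ∀ n : ℕ, 1 ≤ n →
      v n = T n - (1 / (n : ℝ)) * ∑ s ∈ Finset.Icc 1 (n - 1), (s : ℝ) * v s * T (n - s)) :
    ∀ m : ℕ, ∑ s ∈ Finset.range (m + 1), (s : ℝ) * v s * β (m - s) = -(m : ℝ) * β m := by
  intro m
  induction m using Nat.strong_induction_on with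
  | _ m ih =>
    -- the convolution of c with T vanishes
    have hS : ∑ k ∈ Finset.range (m + 1),
        ((k : ℝ) * β k + ∑ s ∈ Finset.range (k + 1), (s : ℝ) * v s * β (k - s)) * T (m - k)
          = 0 := by
      have hD : ∑ k ∈ Finset.range (m + 1),
          (∑ s ∈ Finset.range (k + 1), (s : ℝ) * v s * β (k - s)) * T (m - k)
            = ∑ r ∈ Finset.range (m + 1), β r * (((m - r : ℕ) : ℝ) * T (m - r)) := by
        have hsw := sw_lemma (fun r t => (t : ℝ) * v t * β r * T (m - r - t)) (m + 1)
        have e1 : ∑ k ∈ Finset.range (m + 1),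
            (∑ s ∈ Finset.range (k + 1), (s : ℝ) * v s * β (k - s)) * T (m - k)
              = ∑ k ∈ Finset.range (m + 1), ∑ s ∈ Finset.range (k + 1),
                  (s : ℝ) * v s * β (k - s) * T (m - (k - s) - s) := by
          apply Finset.sum_congr rfl
          intro k hk
          rw [Finset.sum_mul]
          apply Finset.sum_congr rfl
          intro s hs
          simp only [Finset.mem_range] at hs
          congr 2
          omega
        have e2 : ∑ r ∈ Finset.range (m + 1), ∑ t ∈ Finset.range (m + 1 - r),
            (t : ℝ) * v t * β r * T (m - r - t)
              = ∑ r ∈ Finset.range (m + 1), β r * (((m - r : ℕ) : ℝ) * T (m - r)) := by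
          apply Finset.sum_congr rfl
          intro r hr
          simp only [Finset.mem_range] at hr
          rw [← conv_vT T v hT0 hv (m - r), show m + 1 - r = (m - r) + 1 by omega,
            Finset.mul_sum]
          apply Finset.sum_congr rfl
          intro t ht
          ring
        rw [e1, ← hsw, e2]
      have hsplit : ∑ k ∈ Finset.range (m + 1),
          ((k : ℝ) * β k + ∑ s ∈ Finset.range (k + 1), (s : ℝ) * v s * β (k - s)) * T (m - k)
            = ∑ k ∈ Finset.range (m + 1), (k : ℝ) * β k * T (m - k)
              + ∑ k ∈ Finset.range (m + 1),
                  (∑ s ∈ Finset.range (k + 1), (s : ℝ) * v s * β (k - s)) * T (m - k) := by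
        rw [← Finset.sum_add_distrib]
        apply Finset.sum_congr rfl
        intro k _
        ring
      rw [hsplit, hD]
      have : ∑ k ∈ Finset.range (m + 1), (k : ℝ) * β k * T (m - k)
          + ∑ r ∈ Finset.range (m + 1), β r * (((m - r : ℕ) : ℝ) * T (m - r))
          = (m : ℝ) * ∑ k ∈ Finset.range (m + 1), β k * T (m - k) := by
        rw [Finset.mul_sum, ← Finset.sum_add_distrib]
        apply Finset.sum_congr rfl
        intro k hk
        simp only [Finset.mem_range] at hk
        have : ((m - k : ℕ) : ℝ) = (m : ℝ) - (k : ℝ) := by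
          push_cast [Nat.cast_sub (by omega : k ≤ m)]; ring
        rw [this]; ring
      rw [this, conv_one T β hT0 hβ0 hβ m]
      by_cases hm : m = 0 <;> simp [hm]
    -- peel off the top term
    rw [Finset.sum_range_succ] at hS
    have hzero : ∑ k ∈ Finset.range m,
        ((k : ℝ) * β k + ∑ s ∈ Finset.range (k + 1), (s : ℝ) * v s * β (k - s)) * T (m - k)
          = 0 := by
      apply Finset.sum_eq_zero
      intro k hk
      simp only [Finset.mem_range] at hk
      rw [ih k hk]
      ring_nf
    rw [hzero, Nat.sub_self, hT0, mul_one, zero_add] at hS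
    linarith [hS]



open Finset

theorem beta_T_partial_sum_identity (T β v : ℕ → ℝ)
    (hT0 : T 0 = 1)
    (hβ0 : β 0 = 1)
    (hβ : ∀ n : ℕ, 1 ≤ n → β n = -∑ s ∈ Finset.range n, β s * T (n - s))
    (hv : ∀ n : ℕ, 1 ≤ n →
      v n = T n - (1 / (n : ℝ)) * ∑ s ∈ Finset.Icc 1 (n - 1), (s : ℝ) * v s * T (n - s)) :
    ∀ R : ℕ, 1 ≤ R → ∀ n : ℕ, 2 * R ≤ n →
      ∑ s ∈ Finset.range R, β s * T (n - s) =
        v n + (1 / (n : ℝ)) * ∑ r ∈ Finset.range R,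
          β r * ∑ s ∈ Finset.Icc (R - r) (n - R), (s : ℝ) * v s * T (n - r - s) := by
  intro R hR n hn
  have hnpos : (0 : ℝ) < (n : ℝ) := by
    have : 0 < n := by omega
    exact_mod_cast this
  have hnne : (n : ℝ) ≠ 0 := ne_of_gt hnpos
  -- step 1 : per-r decomposition of n * T (n - r)
  have step1 : ∀ r ∈ Finset.range R,
      (n : ℝ) * T (n - r)
        = (∑ t ∈ Finset.range (R - r), (t : ℝ) * v t * T (n - r - t))
          + (∑ t ∈ Finset.Icc (R - r) (n - R), (t : ℝ) * v t * T (n - r - t))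
          + (∑ t ∈ Finset.Ico (n - R + 1) (n - r + 1), (t : ℝ) * v t * T (n - r - t))
          + (r : ℝ) * T (n - r) := by
    intro r hr
    simp only [Finset.mem_range] at hr
    have h2 := conv_vT T v hT0 hv (n - r)
    have hsplit : ∑ t ∈ Finset.range (n - r + 1), (t : ℝ) * v t * T (n - r - t)
        = (∑ t ∈ Finset.range (R - r), (t : ℝ) * v t * T (n - r - t))
          + (∑ t ∈ Finset.Icc (R - r) (n - R), (t : ℝ) * v t * T (n - r - t))
          + (∑ t ∈ Finset.Ico (n - R + 1) (n - r + 1), (t : ℝ) * v t * T (n - r - t)) := by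
      rw [Finset.range_eq_Ico,
        ← Finset.sum_Ico_consecutive _ (by omega : 0 ≤ n - R + 1) (by omega : n - R + 1 ≤ n - r + 1),
        ← Finset.sum_Ico_consecutive _ (by omega : 0 ≤ R - r) (by omega : R - r ≤ n - R + 1),
        show Finset.Ico (R - r) (n - R + 1) = Finset.Icc (R - r) (n - R) from Finset.Ico_add_one_right_eq_Icc .. ,
        ← Finset.range_eq_Ico]
    have hc : ((n - r : ℕ) : ℝ) = (n : ℝ) - (r : ℝ) := by
      have : r ≤ n := by omega
      push_cast [Nat.cast_sub this]
      ring
    rw [hsplit, hc] at h2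
    linarith [h2]
  -- multiply the LHS by n and distribute
  have hL2 : (n : ℝ) * ∑ s ∈ Finset.range R, β s * T (n - s)
      = (∑ r ∈ Finset.range R, β r * ∑ t ∈ Finset.range (R - r), (t : ℝ) * v t * T (n - r - t))
        + (∑ r ∈ Finset.range R, β r * ∑ t ∈ Finset.Icc (R - r) (n - R), (t : ℝ) * v t * T (n - r - t))
        + (∑ r ∈ Finset.range R, β r * ∑ t ∈ Finset.Ico (n - R + 1) (n - r + 1), (t : ℝ) * v t * T (n - r - t))
        + (∑ r ∈ Finset.range R, (r : ℝ) * β r * T (n - r)) := by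
    rw [Finset.mul_sum, ← Finset.sum_add_distrib, ← Finset.sum_add_distrib,
      ← Finset.sum_add_distrib]
    apply Finset.sum_congr rfl
    intro r hr
    have := step1 r hr
    calc (n : ℝ) * (β r * T (n - r)) = β r * ((n : ℝ) * T (n - r)) := by ring
      _ = _ := by rw [this]; ring
  -- Claim A
  have claimA : ∑ r ∈ Finset.range R, β r * ∑ t ∈ Finset.range (R - r), (t : ℝ) * v t * T (n - r - t)
      = ∑ m ∈ Finset.range R, -((m : ℝ) * β m * T (n - m)) := by
    have hsw := sw_lemma (fun r t => β r * ((t : ℝ) * v t * T (n - r - t))) R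
    have e1 : ∑ r ∈ Finset.range R, β r * ∑ t ∈ Finset.range (R - r), (t : ℝ) * v t * T (n - r - t)
        = ∑ r ∈ Finset.range R, ∑ t ∈ Finset.range (R - r), β r * ((t : ℝ) * v t * T (n - r - t)) := by
      apply Finset.sum_congr rfl
      intro r _
      rw [Finset.mul_sum]
    rw [e1, hsw]
    apply Finset.sum_congr rfl
    intro m hm
    simp only [Finset.mem_range] at hm
    have e2 : ∀ t ∈ Finset.range (m + 1),
        β (m - t) * ((t : ℝ) * v t * T (n - (m - t) - t)) = (t : ℝ) * v t * β (m - t) * T (n - m) := by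
      intro t ht
      simp only [Finset.mem_range] at ht
      have : n - (m - t) - t = n - m := by omega
      rw [this]
      ring
    rw [Finset.sum_congr rfl e2, ← Finset.sum_mul, conv_vbeta T β v hT0 hβ0 hβ hv m]
    ring
  -- Claim B
  have claimB : ∑ r ∈ Finset.range R, β r * ∑ t ∈ Finset.Ico (n - R + 1) (n - r + 1), (t : ℝ) * v t * T (n - r - t)
      = (n : ℝ) * v n := by
    have hB : ∀ r ∈ Finset.range R,
        ∑ t ∈ Finset.Ico (n - R + 1) (n - r + 1), (t : ℝ) * v t * T (n - r - t)
          = ∑ u ∈ Finset.range (R - r), ((n - r - u : ℕ) : ℝ) * v (n - r - u) * T u := by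
      intro r hr
      simp only [Finset.mem_range] at hr
      rw [Finset.sum_Ico_eq_sum_range, show n - r + 1 - (n - R + 1) = R - r by omega]
      calc ∑ i ∈ Finset.range (R - r), ((n - R + 1 + i : ℕ) : ℝ) * v (n - R + 1 + i) * T (n - r - (n - R + 1 + i))
          = ∑ i ∈ Finset.range (R - r),
              ((n - r - (R - r - 1 - i) : ℕ) : ℝ) * v (n - r - (R - r - 1 - i)) * T (R - r - 1 - i) := by
            apply Finset.sum_congr rfl
            intro i hi
            simp only [Finset.mem_range] at hi
            have e1 : n - r - (R - r - 1 - i) = n - R + 1 + i := by omega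
            have e2 : n - r - (n - R + 1 + i) = R - r - 1 - i := by omega
            rw [e1, e2]
        _ = ∑ u ∈ Finset.range (R - r), ((n - r - u : ℕ) : ℝ) * v (n - r - u) * T u :=
            Finset.sum_range_reflect (fun u => ((n - r - u : ℕ) : ℝ) * v (n - r - u) * T u) (R - r)
    have e1 : ∑ r ∈ Finset.range R, β r * ∑ t ∈ Finset.Ico (n - R + 1) (n - r + 1), (t : ℝ) * v t * T (n - r - t)
        = ∑ r ∈ Finset.range R, ∑ u ∈ Finset.range (R - r), β r * (((n - r - u : ℕ) : ℝ) * v (n - r - u) * T u) := by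
      apply Finset.sum_congr rfl
      intro r hr
      rw [hB r hr, Finset.mul_sum]
    have hsw := sw_lemma (fun r u => β r * (((n - r - u : ℕ) : ℝ) * v (n - r - u) * T u)) R
    rw [e1, hsw]
    have e2 : ∀ m ∈ Finset.range R,
        ∑ u ∈ Finset.range (m + 1), β (m - u) * (((n - (m - u) - u : ℕ) : ℝ) * v (n - (m - u) - u) * T u)
          = ((n - m : ℕ) : ℝ) * v (n - m) * ∑ u ∈ Finset.range (m + 1), β (m - u) * T u := by
      intro m hm
      simp only [Finset.mem_range] at hm
      rw [Finset.mul_sum]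
      apply Finset.sum_congr rfl
      intro u hu
      simp only [Finset.mem_range] at hu
      have : n - (m - u) - u = n - m := by omega
      rw [this]
      ring
    rw [Finset.sum_congr rfl e2]
    have e3 : ∀ m ∈ Finset.range R,
        ((n - m : ℕ) : ℝ) * v (n - m) * ∑ u ∈ Finset.range (m + 1), β (m - u) * T u
          = if m = 0 then (n : ℝ) * v n else 0 := by
      intro m hm
      simp only [Finset.mem_range] at hm
      have hrev : ∑ u ∈ Finset.range (m + 1), β (m - u) * T u
          = ∑ s ∈ Finset.range (m + 1), β s * T (m - s) := by
        rw [← Finset.sum_range_reflect (fun u => β (m - u) * T u) (m + 1)]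
        apply Finset.sum_congr rfl
        intro j hj
        simp only [Finset.mem_range] at hj
        have e4 : m + 1 - 1 - j = m - j := by omega
        have e5 : m - (m - j) = j := by omega
        rw [e4, e5]
      rw [hrev, conv_one T β hT0 hβ0 hβ m]
      by_cases h : m = 0 <;> simp [h]
    rw [Finset.sum_congr rfl e3, Finset.sum_ite_eq' (Finset.range R) 0 (fun _ => (n : ℝ) * v n)]
    simp only [Finset.mem_range]
    rw [if_pos (by omega)]
  -- cancellation of Claim A against the r * β r * T (n - r) piece
  have hcancel : ∑ m ∈ Finset.range R, -((m : ℝ) * β m * T (n - m))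
      + ∑ r ∈ Finset.range R, (r : ℝ) * β r * T (n - r) = 0 := by
    rw [← Finset.sum_add_distrib]
    apply Finset.sum_eq_zero
    intro r _
    ring
  have key : (n : ℝ) * ∑ s ∈ Finset.range R, β s * T (n - s)
      = (n : ℝ) * v n
        + ∑ r ∈ Finset.range R, β r * ∑ s ∈ Finset.Icc (R - r) (n - R), (s : ℝ) * v s * T (n - r - s) := by
    rw [hL2, claimA, claimB]
    linarith [hcancel]
  field_simp
  linarith [key]
end
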